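/- There exist universal constants C₁, C₂ > 0 with the following property. For every positive integer n, every ρ ∈ (0, 1/2), every ξ ∈ S^{n−1} and every g ∈ ℝⁿ, the random rounding η^ξ satisfies 𝔼⟨η^ξ, g⟩² ≤ C₁·⟨ξ, g⟩² + C₂·(ρ²/n)·|g|². -/

import Mathlib

open MeasureTheory Metric Set
open scoped RealInnerProductSpace

/-- The distribution of the random rounding of a real number `x` to the grid `sℤ`:
writing `x = s(k+p)` with `k = ⌊x/s⌋` and `p ∈ [0,1)`, it takes the value `sk` with
probability `1-p` and `s(k+1)` with probability `p`. -/
noncomputable def roundCoord (s x : ℝ) : Measure ℝ :=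
  ENNReal.ofReal (1 - Int.fract (x / s)) • Measure.dirac (s * ⌊x / s⌋) +
    ENNReal.ofReal (Int.fract (x / s)) • Measure.dirac (s * (⌊x / s⌋ + 1))

/-- The law of the random rounding `η^ξ` of `ξ ∈ ℝⁿ` to the lattice `(ρ/√n)ℤⁿ`,
with independent coordinates rounded as in `roundCoord`. -/
noncomputable def roundingLaw (n : ℕ) (ρ : ℝ) (ξ : EuclideanSpace ℝ (Fin n)) :
    Measure (EuclideanSpace ℝ (Fin n)) :=
  Measure.map (MeasurableEquiv.toLp 2 (Fin n → ℝ))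
    (Measure.pi fun i => roundCoord (ρ / Real.sqrt n) (ξ i))

/-! The coordinates of `η^ξ` are independent with means `ξ i`, so
`𝔼⟨η, g⟩² = ⟨ξ, g⟩² + ∑ i, g i² Var(η i)`. Each `η i` lies in an interval of length
`ρ / √n`, so Popoviciu's inequality gives `Var(η i) ≤ ρ² / (4n)`, and the bound holds
with `C₁ = 1`, `C₂ = 1/4`. -/

open ProbabilityTheory

section Product

variable {ι : Type*} [Fintype ι] {Ω : ι → Type*} {mΩ : ∀ i, MeasurableSpace (Ω i)}
  {μ : (i : ι) → Measure (Ω i)} [∀ i, IsProbabilityMeasure (μ i)] {X : Π i, Ω i → ℝ}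

lemma integral_sq_sum_pi (hX : ∀ i, MemLp (X i) 2 (μ i)) :
    ∫ ω, (∑ i, X i (ω i)) ^ 2 ∂Measure.pi μ =
      (∑ i, ∫ x, X i x ∂μ i) ^ 2 + ∑ i, Var[X i; μ i] := by
  have hsum : MemLp (∑ i, fun ω : Π i, Ω i ↦ X i (ω i)) 2 (Measure.pi μ) :=
    memLp_finsetSum' _ fun i _ ↦ (hX i).comp_measurePreserving (measurePreserving_eval _ i)
  have hmean : ∫ ω, ∑ i, X i (ω i) ∂Measure.pi μ = ∑ i, ∫ x, X i x ∂μ i := by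
    rw [integral_finsetSum _ fun i _ ↦ integrable_comp_eval ((hX i).integrable one_le_two)]
    exact Finset.sum_congr rfl fun i _ ↦ integral_comp_eval (hX i).aestronglyMeasurable
  have hvar := variance_eq_sub hsum
  rw [variance_sum_pi hX] at hvar
  simp only [Finset.sum_apply, Pi.pow_apply] at hvar
  rw [← hmean]
  linarith

end Product

instance (s x : ℝ) : IsProbabilityMeasure (roundCoord s x) := by
  constructor
  simp [roundCoord,
    ← ENNReal.ofReal_add (sub_nonneg.2 (Int.fract_lt_one _).le) (Int.fract_nonneg _)]

lemma integral_roundCoord (s x : ℝ) (f : ℝ → ℝ) :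
    ∫ y, f y ∂roundCoord s x =
      (1 - Int.fract (x / s)) * f (s * ⌊x / s⌋) +
        Int.fract (x / s) * f (s * (⌊x / s⌋ + 1)) := by
  have hp := Int.fract_nonneg (x / s)
  have hp' := (Int.fract_lt_one (x / s)).le
  rw [roundCoord, integral_add_measure, integral_smul_measure, integral_smul_measure,
    integral_dirac, integral_dirac, ENNReal.toReal_ofReal (by linarith), ENNReal.toReal_ofReal hp]
  · simp [smul_eq_mul]
  all_goals exact (integrable_dirac enorm_lt_top).smul_measure ENNReal.ofReal_ne_top

lemma integral_id_roundCoord {s : ℝ} (hs : s ≠ 0) (x : ℝ) : ∫ y, y ∂roundCoord s x = x := by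
  rw [integral_roundCoord, Int.fract]
  field_simp
  ring

lemma ae_mem_Icc_roundCoord {s : ℝ} (hs : 0 ≤ s) (x : ℝ) :
    ∀ᵐ y ∂roundCoord s x, y ∈ Icc (s * ⌊x / s⌋) (s * (⌊x / s⌋ + 1)) := by
  have hmem : ∀ y ∈ ({s * ⌊x / s⌋, s * (⌊x / s⌋ + 1)} : Set ℝ),
      y ∈ Icc (s * ⌊x / s⌋) (s * (⌊x / s⌋ + 1)) := by
    rintro y (rfl | rfl) <;> constructor <;> nlinarith
  rw [roundCoord, ae_add_measure_iff]
  constructor <;>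
    refine Measure.ae_smul_measure ((ae_dirac_iff measurableSet_Icc).2 (hmem _ ?_)) _ <;> simp

lemma variance_id_roundCoord_le {s : ℝ} (hs : 0 ≤ s) (x : ℝ) :
    Var[id; roundCoord s x] ≤ s ^ 2 / 4 := by
  refine (variance_le_sq_of_bounded (ae_mem_Icc_roundCoord hs x) aemeasurable_id).trans_eq ?_
  ring

lemma memLp_id_roundCoord {s : ℝ} (hs : 0 ≤ s) (x : ℝ) : MemLp id 2 (roundCoord s x) :=
  memLp_of_bounded (ae_mem_Icc_roundCoord hs x) aestronglyMeasurable_id 2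

lemma integral_inner_sq_roundingLaw {n : ℕ} (hn : 0 < n) {ρ : ℝ} (hρ : 0 < ρ)
    (ξ g : EuclideanSpace ℝ (Fin n)) :
    ∫ η, ⟪η, g⟫ ^ 2 ∂roundingLaw n ρ ξ =
      ⟪ξ, g⟫ ^ 2 + ∑ i, g i ^ 2 * Var[id; roundCoord (ρ / Real.sqrt n) (ξ i)] := by
  have hs : 0 < ρ / Real.sqrt n := by positivity
  have hX : ∀ i, MemLp (fun y ↦ g i * y) 2 (roundCoord (ρ / Real.sqrt n) (ξ i)) :=
    fun i ↦ (memLp_id_roundCoord hs.le _).const_mul (g i)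
  rw [roundingLaw, integral_map_equiv]
  simp only [MeasurableEquiv.toLp_apply, PiLp.inner_apply, RCLike.inner_apply,
    conj_trivial]
  rw [integral_sq_sum_pi hX]
  congr 2
  · refine Finset.sum_congr rfl fun i _ ↦ ?_
    rw [integral_const_mul, integral_id_roundCoord hs.ne']
  · exact funext fun i ↦ variance_const_mul _ _ _

lemma integral_inner_sq_roundingLaw_le {n : ℕ} (hn : 0 < n) {ρ : ℝ} (hρ : 0 < ρ)
    (ξ g : EuclideanSpace ℝ (Fin n)) :
    ∫ η, ⟪η, g⟫ ^ 2 ∂roundingLaw n ρ ξ ≤ ⟪ξ, g⟫ ^ 2 + 1 / 4 * (ρ ^ 2 / n) * ‖g‖ ^ 2 := by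
  have hs : 0 ≤ ρ / Real.sqrt n := by positivity
  rw [integral_inner_sq_roundingLaw hn hρ, EuclideanSpace.norm_sq_eq, Finset.mul_sum]
  refine add_le_add_right (Finset.sum_le_sum fun i _ ↦ ?_) _
  calc g i ^ 2 * Var[id; roundCoord (ρ / Real.sqrt n) (ξ i)]
      ≤ g i ^ 2 * ((ρ / Real.sqrt n) ^ 2 / 4) := by
        gcongr; exact variance_id_roundCoord_le hs _
    _ = 1 / 4 * (ρ ^ 2 / n) * ‖g i‖ ^ 2 := by
        rw [div_pow, Real.sq_sqrt (Nat.cast_nonneg n), Real.norm_eq_abs, sq_abs]; ring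

/-- second-moment comparison for the random rounding:
`𝔼⟨η^ξ, g⟩² ≤ C₁⟨ξ,g⟩² + C₂ (ρ²/n)|g|²`. -/
theorem rounding_second_moment_comparison :
    ∃ C₁ C₂ : ℝ, 0 < C₁ ∧ 0 < C₂ ∧
      ∀ n : ℕ, 0 < n → ∀ ρ : ℝ, ρ ∈ Set.Ioo (0 : ℝ) (1 / 2) →
        ∀ ξ : EuclideanSpace ℝ (Fin n), ‖ξ‖ = 1 →
          ∀ g : EuclideanSpace ℝ (Fin n),
            (∫ η, ⟪η, g⟫ ^ 2 ∂(roundingLaw n ρ ξ)) ≤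
              C₁ * ⟪ξ, g⟫ ^ 2 + C₂ * (ρ ^ 2 / n) * ‖g‖ ^ 2 := by
  refine ⟨1, 1 / 4, one_pos, by norm_num, fun n hn ρ hρ ξ _ g ↦ ?_⟩
  rw [one_mul]
  exact integral_inner_sq_roundingLaw_le hn hρ.1 ξ g
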